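/- Let d ≥ 2, let Δ ≥ 1 be an integer, and let D ≥ 2 be a real number such that |x − y| ≤ D whenever x ∼_Δ y. Let a, a', c ∈ ℤ^d with c ≠ 0, and suppose there is a real τ ≥ 0 with a = a' + τc and |a| ≥ D²(|a'| + |c|)|c|. Then for every b ∈ ℤ^d with b ∼_Δ a one has ⟨b − a, c⟩ = 0, and moreover b + tc ∼_Δ a + tc for every integer t. In particular [a + tc]_Δ = [a]_Δ + tc for every integer t ≥ 0. -/

import Mathlib

/-!
Write `x = a + u` for `x ∼_Δ a`, so `|u| ≤ D` and `|a + u| = |a|`, i.e. `2⟨a, u⟩ = -|u|²`.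
Splitting `a = a' + τc` gives `τ⟨c, u⟩ = -|u|²/2 - ⟨a', u⟩`, which is bounded by `D²/2 + D|a'|`.
Since `⟨c, u⟩` is an integer, it is either `0` or at least `1` in absolute value; in the latter
case `τ ≤ D²/2 + D|a'|`, so `|a| ≤ |a'| + τ|c|` is too small for the hypothesis on `|a|`.
Hence the whole block of `a` lies in the hyperplane `⟨·, c⟩ = ⟨a, c⟩`, on which translation by
`tc` preserves norms, so every generating step inside the block survives the translation.
-/

open scoped RealInnerProductSpace

/-- The lattice point `a ∈ ℤ^d` viewed as a vector in Euclidean space `ℝ^d`. -/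
noncomputable def latt {d : ℕ} (a : Fin d → ℤ) : EuclideanSpace ℝ (Fin d) :=
  WithLp.toLp 2 (fun i => (a i : ℝ))

/-- The pre-equivalence relation generating the block decomposition `E_Δ`:
`a ≈ b` iff `|a| = |b|` (equivalently `|a|² = |b|²`) and `|a − b| ≤ Δ`. -/
noncomputable def preRel {d : ℕ} (Δ : ℕ) (a b : Fin d → ℤ) : Prop :=
  ‖latt a‖ = ‖latt b‖ ∧ ‖latt (a - b)‖ ≤ (Δ : ℝ)

section InnerProductSpace

variable {E : Type*} [NormedAddCommGroup E] [InnerProductSpace ℝ E]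

lemma inner_eq_neg_half_sq_of_norm_add_eq {a u : E} (h : ‖a + u‖ = ‖a‖) :
    ⟪a, u⟫ = -(‖u‖ ^ 2 / 2) := by
  have := norm_add_sq_real a u
  rw [h] at this
  linarith

lemma norm_add_smul_eq_of_norm_eq_of_inner_eq {x y c : E} (hn : ‖x‖ = ‖y‖)
    (hi : ⟪x, c⟫ = ⟪y, c⟫) (t : ℝ) : ‖x + t • c‖ = ‖y + t • c‖ := by
  have hsq : ‖x + t • c‖ ^ 2 = ‖y + t • c‖ ^ 2 := by
    simp only [norm_add_sq_real, real_inner_smul_right, hn, hi]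
  exact (pow_left_inj₀ (norm_nonneg _) (norm_nonneg _) two_ne_zero).mp hsq

lemma abs_inner_lt_one_of_norm_add_eq {a a' c u : E} {τ D : ℝ} (hτ : 0 ≤ τ)
    (ha : a = a' + τ • c) (hc : 1 ≤ ‖c‖) (hD : 2 ≤ D)
    (hbig : D ^ 2 * (‖a'‖ + ‖c‖) * ‖c‖ ≤ ‖a‖)
    (hnorm : ‖a + u‖ = ‖a‖) (hu : ‖u‖ ≤ D) : |⟪c, u⟫| < 1 := by
  by_contra! hI
  have hτI : τ * ⟪c, u⟫ = -(‖u‖ ^ 2 / 2) - ⟪a', u⟫ := by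
    have := inner_eq_neg_half_sq_of_norm_add_eq hnorm
    rw [ha, inner_add_left, real_inner_smul_left] at this
    linarith
  have hτ_le : τ ≤ D ^ 2 / 2 + ‖a'‖ * D := calc
    τ ≤ τ * |⟪c, u⟫| := le_mul_of_one_le_right hτ hI
    _ = |-(‖u‖ ^ 2 / 2) - ⟪a', u⟫| := by rw [← hτI, abs_mul, abs_of_nonneg hτ]
    _ ≤ ‖u‖ ^ 2 / 2 + ‖a'‖ * ‖u‖ := by
      refine (abs_sub _ _).trans (add_le_add ?_ (abs_real_inner_le_norm _ _))
      rw [abs_neg, abs_of_nonneg (by positivity)]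
    _ ≤ D ^ 2 / 2 + ‖a'‖ * D := by gcongr
  have hna : ‖a‖ ≤ ‖a'‖ + τ * ‖c‖ := by
    rw [ha]
    refine (norm_add_le _ _).trans_eq ?_
    rw [norm_smul, Real.norm_of_nonneg hτ]
  have hc₀ : 0 ≤ ‖c‖ := zero_le_one.trans hc
  have hDc : 1 + D * ‖c‖ ≤ D ^ 2 * ‖c‖ := by
    nlinarith [mul_le_mul_of_nonneg_right (show 1 ≤ D * (D - 1) by nlinarith) hc₀]
  have ha' : ‖a'‖ + ‖a'‖ * D * ‖c‖ ≤ D ^ 2 * ‖a'‖ * ‖c‖ := by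
    nlinarith [mul_le_mul_of_nonneg_left hDc (norm_nonneg a')]
  have hc' : D ^ 2 / 2 * ‖c‖ < D ^ 2 * ‖c‖ * ‖c‖ := by
    nlinarith [mul_pos (by positivity : 0 < D ^ 2) (by linarith : 0 < ‖c‖)]
  nlinarith [mul_le_mul_of_nonneg_right hτ_le hc₀]

end InnerProductSpace

lemma Relation.EqvGen.map_of_forall_class {α : Type*} {r : α → α → Prop} {f : α → α} {a : α}
    (hf : ∀ p q, EqvGen r p a → r p q → r (f p) (f q)) {x y : α}
    (hxy : EqvGen r x y) (hy : EqvGen r y a) : EqvGen r (f x) (f y) := by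
  induction hxy with
  | rel p q hpq => exact .rel _ _ (hf p q (.trans _ _ _ (.rel _ _ hpq) hy) hpq)
  | refl p => exact .refl _
  | symm p q hpq ih => exact .symm _ _ (ih (.trans _ _ _ (.symm _ _ hpq) hy))
  | trans p q s _ hqs ih₁ ih₂ => exact .trans _ _ _ (ih₁ (.trans _ _ _ hqs hy)) (ih₂ hy)

section Lattice

variable {d : ℕ}

lemma latt_add (a b : Fin d → ℤ) : latt (a + b) = latt a + latt b := by
  ext i
  simp [latt]

lemma latt_sub (a b : Fin d → ℤ) : latt (a - b) = latt a - latt b := by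
  ext i
  simp [latt]

lemma latt_zsmul (t : ℤ) (c : Fin d → ℤ) : latt (t • c) = (t : ℝ) • latt c := by
  ext i
  simp [latt]

lemma inner_latt (u v : Fin d → ℤ) : ⟪latt u, latt v⟫ = ((∑ i, u i * v i : ℤ) : ℝ) := by
  simp [latt, PiLp.inner_apply, mul_comm]

lemma inner_latt_eq_zero_of_abs_lt_one {u v : Fin d → ℤ} (h : |⟪latt u, latt v⟫| < 1) :
    ⟪latt u, latt v⟫ = 0 := by
  rw [inner_latt] at h ⊢
  have : |∑ i, u i * v i| < 1 := by exact_mod_cast h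
  rw [Int.abs_lt_one_iff.mp this, Int.cast_zero]

lemma one_le_norm_latt {c : Fin d → ℤ} (hc : c ≠ 0) : 1 ≤ ‖latt c‖ := by
  obtain ⟨i, hi⟩ := Function.ne_iff.mp hc
  calc (1 : ℝ) ≤ |(c i : ℝ)| := by exact_mod_cast Int.one_le_abs hi
    _ = ‖latt c i‖ := rfl
    _ ≤ ‖latt c‖ := PiLp.norm_apply_le _ _

lemma norm_latt_eq_of_eqvGen {Δ : ℕ} {x y : Fin d → ℤ} (h : Relation.EqvGen (preRel Δ) x y) :
    ‖latt x‖ = ‖latt y‖ := by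
  induction h with
  | rel _ _ h => exact h.1
  | refl => rfl
  | symm _ _ _ ih => exact ih.symm
  | trans _ _ _ _ _ ih₁ ih₂ => exact ih₁.trans ih₂

lemma preRel_add_zsmul {Δ : ℕ} {x y c : Fin d → ℤ} (h : preRel Δ x y)
    (hi : ⟪latt x, latt c⟫ = ⟪latt y, latt c⟫) (t : ℤ) :
    preRel Δ (x + t • c) (y + t • c) := by
  refine ⟨?_, by simpa only [add_sub_add_right_eq_sub] using h.2⟩
  simp only [latt_add, latt_zsmul]
  exact norm_add_smul_eq_of_norm_eq_of_inner_eq h.1 hi t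

end Lattice

theorem stmt_14_general {d : ℕ} (Δ : ℕ)
    (D : ℝ) (hD : 2 ≤ D)
    (hdiam : ∀ x y : Fin d → ℤ, Relation.EqvGen (preRel Δ) x y →
      ‖latt (x - y)‖ ≤ D)
    (a a' c : Fin d → ℤ) (hc : c ≠ 0)
    (τ : ℝ) (hτ : 0 ≤ τ) (ha : latt a = latt a' + τ • latt c)
    (hbig : D ^ 2 * (‖latt a'‖ + ‖latt c‖) * ‖latt c‖ ≤ ‖latt a‖)
    (b : Fin d → ℤ) (hb : Relation.EqvGen (preRel Δ) b a) :
    (⟪latt (b - a), latt c⟫ : ℝ) = 0 ∧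
    ∀ t : ℤ, Relation.EqvGen (preRel Δ) (b + t • c) (a + t • c) := by
  have horth : ∀ x, Relation.EqvGen (preRel Δ) x a → ⟪latt (x - a), latt c⟫ = 0 := by
    intro x hx
    rw [real_inner_comm]
    refine inner_latt_eq_zero_of_abs_lt_one
      (abs_inner_lt_one_of_norm_add_eq hτ ha (one_le_norm_latt hc) hD hbig ?_ (hdiam x a hx))
    rw [latt_sub, add_sub_cancel, norm_latt_eq_of_eqvGen hx]
  have hplane : ∀ x, Relation.EqvGen (preRel Δ) x a → ⟪latt x, latt c⟫ = ⟪latt a, latt c⟫ :=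
    fun x hx => sub_eq_zero.mp (by rw [← inner_sub_left, ← latt_sub, horth x hx])
  refine ⟨horth b hb, fun t => ?_⟩
  refine Relation.EqvGen.map_of_forall_class (f := (· + t • c)) (fun p q hp hpq => ?_) hb (.refl a)
  have hq : Relation.EqvGen (preRel Δ) q a := .trans _ _ _ (.symm _ _ (.rel _ _ hpq)) hp
  exact preRel_add_zsmul hpq ((hplane p hp).trans (hplane q hq).symm) t

/-- Proposition 4.4(ii): let `D ≥ 2` bound all block diameters of `∼_Δ`.
If `a = a' + τc` with `τ ≥ 0` and `|a| ≥ D²(|a'|+|c|)|c|`, then every `b ∼_Δ a`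
satisfies `⟨b − a, c⟩ = 0` and `b + tc ∼_Δ a + tc` for every integer `t`;
in particular `[a + tc]_Δ = [a]_Δ + tc` for `t ≥ 0`. -/
theorem stmt_14 {d : ℕ} (hd : 2 ≤ d) (Δ : ℕ) (hΔ : 1 ≤ Δ)
    (D : ℝ) (hD : 2 ≤ D)
    (hdiam : ∀ x y : Fin d → ℤ, Relation.EqvGen (preRel Δ) x y →
      ‖latt (x - y)‖ ≤ D)
    (a a' c : Fin d → ℤ) (hc : c ≠ 0)
    (τ : ℝ) (hτ : 0 ≤ τ) (ha : latt a = latt a' + τ • latt c)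
    (hbig : D ^ 2 * (‖latt a'‖ + ‖latt c‖) * ‖latt c‖ ≤ ‖latt a‖)
    (b : Fin d → ℤ) (hb : Relation.EqvGen (preRel Δ) b a) :
    (⟪latt (b - a), latt c⟫ : ℝ) = 0 ∧
    ∀ t : ℤ, Relation.EqvGen (preRel Δ) (b + t • c) (a + t • c) :=
  stmt_14_general Δ D hD hdiam a a' c hc τ hτ ha hbig b hb
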